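/- arXiv:2306.05275 — 4 statements merged into one kernel-verified Lean document; each statement's English description precedes it below -/
import Mathlib

section
/- Let X and Y be standard Borel spaces, let P₂ and Q₂ be probability measures on Y, and let κ and η be Markov kernels from Y to X. Let P and Q be the probability measures on X × Y determined by P(A × B) = ∫_B κ(y)(A) dP₂(y) and Q(A × B) = ∫_B η(y)(A) dQ₂(y). Then d_TV(P, Q) ≤ 1 − (1 − sup_{y∈Y} d_TV(κ(y), η(y))) · (1 − d_TV(P₂, Q₂)). -/
open MeasureTheory ProbabilityTheory

/-- Total variation distance `sup_A |μ(A) − ν(A)|` between two measures. -/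
noncomputable def tvDist {X : Type*} [MeasurableSpace X] (μ ν : Measure X) : ℝ :=
  ⨆ S : {S : Set X // MeasurableSet S}, |(μ S.1).toReal - (ν S.1).toReal|

/-!
Writing `P` and `Q` as the swapped compositions `P₂ ⊗ κ` and `Q₂ ⊗ η`, a measurable `S` has
`P S = ∫ f dP₂` and `Q S = ∫ g dQ₂` with `f y = κ y S_y` and `g y = η y S_y`, so `f ≤ 1` and
`f ≤ g + ε`. Hence `f ≤ min g (1 - ε) + ε`, and since `min g (1 - ε)` takes values in `[0, 1 - ε]`,
integrating it against `P₂` rather than `Q₂` costs at most `(1 - ε) · d_TV(P₂, Q₂)`: by the Hahn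
decomposition, `P₂ ≤ Q₂ + (P₂ - Q₂)` with `(P₂ - Q₂)(Y) ≤ d_TV(P₂, Q₂)`.
-/

open scoped ENNReal

section tvDist

variable {X : Type*} [MeasurableSpace X] {μ ν : Measure X}

lemma tvDist_nonneg (μ ν : Measure X) : 0 ≤ tvDist μ ν :=
  Real.iSup_nonneg fun _ => abs_nonneg _

lemma tvDist_comm (μ ν : Measure X) : tvDist μ ν = tvDist ν μ := by
  simp only [tvDist, abs_sub_comm]

lemma abs_measureReal_sub_le_tvDist [IsFiniteMeasure μ] [IsFiniteMeasure ν] {S : Set X}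
    (hS : MeasurableSet S) : |μ.real S - ν.real S| ≤ tvDist μ ν := by
  have hbdd : BddAbove (Set.range fun T : {S : Set X // MeasurableSet S} =>
      |μ.real T.1 - ν.real T.1|) := by
    refine ⟨μ.real .univ + ν.real .univ, ?_⟩
    rintro _ ⟨T, rfl⟩
    have hμ := measureReal_mono (μ := μ) (Set.subset_univ T.1)
    have hν := measureReal_mono (μ := ν) (Set.subset_univ T.1)
    have hμ₀ := measureReal_nonneg (μ := μ) (s := T.1)
    have hν₀ := measureReal_nonneg (μ := ν) (s := T.1)
    exact abs_sub_le_iff.2 ⟨by linarith, by linarith⟩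
  exact le_ciSup hbdd ⟨S, hS⟩

lemma measure_le_add_tvDist [IsFiniteMeasure μ] [IsFiniteMeasure ν] {S : Set X}
    (hS : MeasurableSet S) : μ S ≤ ν S + ENNReal.ofReal (tvDist μ ν) := by
  rw [← ofReal_measureReal (measure_ne_top μ S), ← ofReal_measureReal (measure_ne_top ν S),
    ← ENNReal.ofReal_add measureReal_nonneg (tvDist_nonneg μ ν)]
  exact ENNReal.ofReal_le_ofReal
    (sub_le_iff_le_add'.1 (abs_sub_le_iff.1 (abs_measureReal_sub_le_tvDist hS)).1)

lemma measureReal_sub_le_of_le_add [IsFiniteMeasure ν] {S : Set X} {c : ℝ} (hc : 0 ≤ c)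
    (h : μ S ≤ ν S + ENNReal.ofReal c) : μ.real S - ν.real S ≤ c := by
  have := ENNReal.toReal_mono (by finiteness) h
  rw [ENNReal.toReal_add (measure_ne_top ν S) ENNReal.ofReal_ne_top,
    ENNReal.toReal_ofReal hc] at this
  exact sub_le_iff_le_add'.2 this

lemma tvDist_le_of_forall_le_add [IsFiniteMeasure μ] [IsFiniteMeasure ν] {c : ℝ} (hc : 0 ≤ c)
    (hμν : ∀ S, MeasurableSet S → μ S ≤ ν S + ENNReal.ofReal c)
    (hνμ : ∀ S, MeasurableSet S → ν S ≤ μ S + ENNReal.ofReal c) : tvDist μ ν ≤ c :=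
  ciSup_le fun S => abs_sub_le_iff.2
    ⟨measureReal_sub_le_of_le_add hc (hμν S.1 S.2), measureReal_sub_le_of_le_add hc (hνμ S.1 S.2)⟩

lemma tvDist_le_one [IsProbabilityMeasure μ] [IsProbabilityMeasure ν] : tvDist μ ν ≤ 1 :=
  tvDist_le_of_forall_le_add zero_le_one
    (fun _ _ => ENNReal.ofReal_one ▸ prob_le_one.trans le_add_self)
    (fun _ _ => ENNReal.ofReal_one ▸ prob_le_one.trans le_add_self)

lemma measure_sub_apply_univ_le_tvDist [IsFiniteMeasure μ] [IsFiniteMeasure ν] :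
    (μ - ν) Set.univ ≤ ENNReal.ofReal (tvDist μ ν) := by
  obtain ⟨s, hs⟩ := exists_isHahnDecomposition μ ν
  have hsc := hs.measurableSet.compl
  calc (μ - ν) Set.univ = (μ - ν) sᶜ := by
        rw [← measure_add_measure_compl hs.measurableSet,
          Measure.sub_apply_eq_zero_of_isHahnDecomposition hs, zero_add]
    _ = μ sᶜ - ν sᶜ := by
        rw [← Measure.restrict_apply_univ, Measure.restrict_sub_eq_restrict_sub_restrict hsc,
          Measure.sub_apply .univ hs.ge_on_compl, Measure.restrict_apply_univ,
          Measure.restrict_apply_univ]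
    _ ≤ ENNReal.ofReal (tvDist μ ν) := tsub_le_iff_left.2 (measure_le_add_tvDist hsc)

lemma lintegral_le_lintegral_add_mul_tvDist [IsFiniteMeasure μ] [IsFiniteMeasure ν]
    {f : X → ℝ≥0∞} {c : ℝ≥0∞} (hf : ∀ x, f x ≤ c) :
    ∫⁻ x, f x ∂μ ≤ ∫⁻ x, f x ∂ν + c * ENNReal.ofReal (tvDist μ ν) :=
  calc ∫⁻ x, f x ∂μ ≤ ∫⁻ x, f x ∂(ν + (μ - ν)) :=
        lintegral_mono' ((Measure.sub_le_iff_le_add.1 le_rfl).trans_eq (add_comm _ _)) le_rfl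
    _ ≤ ∫⁻ x, f x ∂ν + ∫⁻ _, c ∂(μ - ν) := by
        rw [lintegral_add_measure]
        gcongr with x
        exact hf x
    _ ≤ ∫⁻ x, f x ∂ν + c * ENNReal.ofReal (tvDist μ ν) := by
        rw [lintegral_const]
        gcongr
        exact measure_sub_apply_univ_le_tvDist

lemma lintegral_le_lintegral_add_of_le_add [IsProbabilityMeasure μ] [IsFiniteMeasure ν]
    {f g : X → ℝ≥0∞} {ε : ℝ} (hε₀ : 0 ≤ ε) (hε₁ : ε ≤ 1) (hf : ∀ x, f x ≤ 1)
    (hfg : ∀ x, f x ≤ g x + ENNReal.ofReal ε) :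
    ∫⁻ x, f x ∂μ ≤ ∫⁻ x, g x ∂ν + ENNReal.ofReal (1 - (1 - ε) * (1 - tvDist μ ν)) := by
  set e := ENNReal.ofReal ε
  set d := ENNReal.ofReal (tvDist μ ν)
  have hf_le : ∀ x, f x ≤ min (g x) (1 - e) + e := fun x => by
    rw [← min_add_add_right, tsub_add_cancel_of_le (ENNReal.ofReal_le_one.2 hε₁)]
    exact le_min (hfg x) (hf x)
  have hbound : e + (1 - e) * d = ENNReal.ofReal (1 - (1 - ε) * (1 - tvDist μ ν)) := by
    rw [← ENNReal.ofReal_one, ← ENNReal.ofReal_sub _ hε₀,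
      ← ENNReal.ofReal_mul (sub_nonneg.2 hε₁),
      ← ENNReal.ofReal_add hε₀ (mul_nonneg (sub_nonneg.2 hε₁) (tvDist_nonneg μ ν))]
    congr 1
    ring
  calc ∫⁻ x, f x ∂μ ≤ ∫⁻ x, min (g x) (1 - e) ∂μ + e := by
        refine (lintegral_mono hf_le).trans_eq ?_
        rw [lintegral_add_right _ measurable_const, lintegral_const, measure_univ, mul_one]
    _ ≤ ∫⁻ x, min (g x) (1 - e) ∂ν + (1 - e) * d + e := by
        gcongr
        exact lintegral_le_lintegral_add_mul_tvDist fun x => min_le_right _ _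
    _ ≤ ∫⁻ x, g x ∂ν + (1 - e) * d + e := by
        gcongr with x
        exact min_le_left _ _
    _ = ∫⁻ x, g x ∂ν + ENNReal.ofReal (1 - (1 - ε) * (1 - tvDist μ ν)) := by
        rw [← hbound, add_assoc, add_comm ((1 - e) * d)]

end tvDist

lemma tvDist_map_le {X Y : Type*} [MeasurableSpace X] [MeasurableSpace Y] {μ ν : Measure X}
    [IsFiniteMeasure μ] [IsFiniteMeasure ν] {f : X → Y} (hf : Measurable f) :
    tvDist (μ.map f) (ν.map f) ≤ tvDist μ ν :=
  ciSup_le fun S => by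
    simp only [← measureReal_def, map_measureReal_apply hf S.2]
    exact abs_measureReal_sub_le_tvDist (hf S.2)

section CompProd

variable {X Y : Type*} [MeasurableSpace X] [MeasurableSpace Y]

lemma eq_map_swap_compProd {P₂ : Measure Y} [IsFiniteMeasure P₂] {κ : Kernel Y X}
    [IsFiniteKernel κ] {P : Measure (X × Y)}
    (hP : ∀ (A : Set X) (B : Set Y), MeasurableSet A → MeasurableSet B →
        P (A ×ˢ B) = ∫⁻ y in B, κ y A ∂P₂) :
    P = (P₂ ⊗ₘ κ).map Prod.swap := by
  refine (Measure.ext_prod (μ := (P₂ ⊗ₘ κ).map Prod.swap) fun {A B} hA hB => ?_).symm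
  rw [hP A B hA hB, Measure.map_apply measurable_swap (hA.prod hB), Set.preimage_swap_prod,
    Measure.compProd_apply_prod hB hA]

lemma compProd_apply_le_add {P₂ Q₂ : Measure Y} [IsProbabilityMeasure P₂]
    [IsFiniteMeasure Q₂] {κ η : Kernel Y X} [IsMarkovKernel κ] [IsFiniteKernel η]
    {ε : ℝ} (hε₀ : 0 ≤ ε) (hε₁ : ε ≤ 1) (hκη : ∀ y, tvDist (κ y) (η y) ≤ ε)
    {S : Set (Y × X)} (hS : MeasurableSet S) :
    (P₂ ⊗ₘ κ) S ≤ (Q₂ ⊗ₘ η) S + ENNReal.ofReal (1 - (1 - ε) * (1 - tvDist P₂ Q₂)) := by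
  rw [Measure.compProd_apply hS, Measure.compProd_apply hS]
  refine lintegral_le_lintegral_add_of_le_add hε₀ hε₁ (fun _ => prob_le_one) fun y => ?_
  grw [measure_le_add_tvDist (μ := κ y) (ν := η y) (measurable_prodMk_left hS), hκη y]

lemma tvDist_compProd_le {P₂ Q₂ : Measure Y} [IsProbabilityMeasure P₂]
    [IsProbabilityMeasure Q₂] {κ η : Kernel Y X} [IsMarkovKernel κ] [IsMarkovKernel η]
    {ε : ℝ} (hε₀ : 0 ≤ ε) (hε₁ : ε ≤ 1) (hκη : ∀ y, tvDist (κ y) (η y) ≤ ε) :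
    tvDist (P₂ ⊗ₘ κ) (Q₂ ⊗ₘ η) ≤ 1 - (1 - ε) * (1 - tvDist P₂ Q₂) := by
  have hδ₀ := tvDist_nonneg P₂ Q₂
  have hδ₁ : tvDist P₂ Q₂ ≤ 1 := tvDist_le_one
  refine tvDist_le_of_forall_le_add (by nlinarith)
    (fun S hS => compProd_apply_le_add hε₀ hε₁ hκη hS) fun S hS => ?_
  rw [tvDist_comm P₂]
  exact compProd_apply_le_add hε₀ hε₁ (fun y => tvDist_comm (κ y) (η y) ▸ hκη y) hS

end CompProd

theorem tv_product_bound_general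
    {X Y : Type*} [MeasurableSpace X]
    [MeasurableSpace Y]
    (P₂ Q₂ : Measure Y) [IsProbabilityMeasure P₂] [IsProbabilityMeasure Q₂]
    (κ η : ProbabilityTheory.Kernel Y X)
    [ProbabilityTheory.IsMarkovKernel κ] [ProbabilityTheory.IsMarkovKernel η]
    (P Q : Measure (X × Y))
    (hP : ∀ (A : Set X) (B : Set Y), MeasurableSet A → MeasurableSet B →
        P (A ×ˢ B) = ∫⁻ y in B, κ y A ∂P₂)
    (hQ : ∀ (A : Set X) (B : Set Y), MeasurableSet A → MeasurableSet B →
        Q (A ×ˢ B) = ∫⁻ y in B, η y A ∂Q₂) :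
    tvDist P Q ≤ 1 - (1 - ⨆ y, tvDist (κ y) (η y)) * (1 - tvDist P₂ Q₂) := by
  have hκη : ∀ y, tvDist (κ y) (η y) ≤ ⨆ y, tvDist (κ y) (η y) :=
    le_ciSup ⟨1, by rintro _ ⟨y, rfl⟩; exact tvDist_le_one⟩
  have hε₀ : 0 ≤ ⨆ y, tvDist (κ y) (η y) := Real.iSup_nonneg fun y => tvDist_nonneg _ _
  have hε₁ : ⨆ y, tvDist (κ y) (η y) ≤ 1 := Real.iSup_le (fun y => tvDist_le_one) zero_le_one
  rw [eq_map_swap_compProd hP, eq_map_swap_compProd hQ]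
  exact (tvDist_map_le measurable_swap).trans (tvDist_compProd_le hε₀ hε₁ hκη)

theorem tv_product_bound
    {X Y : Type*} [MeasurableSpace X] [StandardBorelSpace X]
    [MeasurableSpace Y] [StandardBorelSpace Y] [Nonempty Y]
    (P₂ Q₂ : Measure Y) [IsProbabilityMeasure P₂] [IsProbabilityMeasure Q₂]
    (κ η : ProbabilityTheory.Kernel Y X)
    [ProbabilityTheory.IsMarkovKernel κ] [ProbabilityTheory.IsMarkovKernel η]
    (P Q : Measure (X × Y))
    (hP : ∀ (A : Set X) (B : Set Y), MeasurableSet A → MeasurableSet B →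
        P (A ×ˢ B) = ∫⁻ y in B, κ y A ∂P₂)
    (hQ : ∀ (A : Set X) (B : Set Y), MeasurableSet A → MeasurableSet B →
        Q (A ×ˢ B) = ∫⁻ y in B, η y A ∂Q₂) :
    tvDist P Q ≤ 1 - (1 - ⨆ y, tvDist (κ y) (η y)) * (1 - tvDist P₂ Q₂) :=
  tv_product_bound_general P₂ Q₂ κ η P Q hP hQ
end

section
/- Let b > 0 and let X₁, …, X_d be i.i.d. real random variables with the Laplace(0, b) distribution, i.e., with density x ↦ e^{−|x|/b}/(2b) with respect to Lebesgue measure. Then for every β > 0, P( √(Σ_{s=1}^d X_s²) ≥ b·√d·log(d/β) ) ≤ β. -/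
open MeasureTheory

/-- The Laplace distribution `Laplace(0, b)` on `ℝ`, with density `x ↦ e^{−|x|/b}/(2b)`
with respect to Lebesgue measure. -/
noncomputable def laplaceMeasure (b : ℝ) : Measure ℝ :=
  volume.withDensity fun x => ENNReal.ofReal (Real.exp (-|x| / b) / (2 * b))

/-!
A union bound over the coordinates: if `√(Σ x_s²) ≥ c √d` then some `|x_s| ≥ c`, and each of
these `d` events has probability at most `e^{-c/b}`. With `c = b log(d/β)` the sum is exactly `β`.
-/

open Real Set
open scoped ENNReal

lemma exists_sqrt_sum_sq_le_sqrt_card_mul_abs {ι : Type*} [Fintype ι] [Nonempty ι]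
    (x : ι → ℝ) : ∃ i, √(∑ j, x j ^ 2) ≤ √(Fintype.card ι) * |x i| := by
  obtain ⟨i, -, hi⟩ := Finset.exists_max_image Finset.univ (fun j => |x j|) Finset.univ_nonempty
  refine ⟨i, ?_⟩
  have hsum : ∑ j, x j ^ 2 ≤ Fintype.card ι * |x i| ^ 2 := by
    have := Finset.sum_le_card_nsmul Finset.univ (fun j => x j ^ 2) _
      fun j _ => sq_le_sq.mpr ((abs_abs (x i)).symm ▸ hi j (Finset.mem_univ j))
    rwa [Finset.card_univ, nsmul_eq_mul] at this
  calc √(∑ j, x j ^ 2) ≤ √(Fintype.card ι * |x i| ^ 2) := Real.sqrt_le_sqrt hsum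
    _ = √(Fintype.card ι) * |x i| := by
      rw [Real.sqrt_mul (Nat.cast_nonneg _), sqrt_sq (abs_nonneg _)]

lemma measure_pi_exists_mem_le_sum {ι : Type*} [Fintype ι] {α : ι → Type*}
    [∀ i, MeasurableSpace (α i)] (μ : ∀ i, Measure (α i)) [∀ i, IsProbabilityMeasure (μ i)]
    {s : ∀ i, Set (α i)} (hs : ∀ i, MeasurableSet (s i)) :
    Measure.pi μ {x | ∃ i, x i ∈ s i} ≤ ∑ i, μ i (s i) := by
  calc Measure.pi μ {x | ∃ i, x i ∈ s i} = Measure.pi μ (⋃ i, Function.eval i ⁻¹' s i) := by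
        congr 1; ext x; simp
    _ ≤ ∑ i, Measure.pi μ (Function.eval i ⁻¹' s i) := measure_iUnion_fintype_le _ _
    _ = ∑ i, μ i (s i) := by
        simp_rw [(measurePreserving_eval μ _).measure_preimage (hs _).nullMeasurableSet]

lemma lintegral_Ioi_exp_neg_div {b : ℝ} (hb : 0 < b) (t : ℝ) :
    ∫⁻ x in Ioi t, ENNReal.ofReal (exp (-x / b)) = ENNReal.ofReal (b * exp (-t / b)) := by
  have hrewrite : ∀ x, -x / b = -b⁻¹ * x := fun x => by field_simp
  simp_rw [hrewrite]
  rw [← ofReal_integral_eq_lintegral_ofReal (exp_neg_integrableOn_Ioi t (inv_pos.mpr hb))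
    (ae_of_all _ fun _ => (exp_pos _).le), integral_exp_mul_Ioi (by simpa using hb)]
  congr 1
  field_simp

section laplaceMeasure

variable {b : ℝ}

instance : NullSingletonClass (laplaceMeasure b) := by
  unfold laplaceMeasure; infer_instance

lemma laplaceMeasure_preimage_neg {s : Set ℝ} (hs : MeasurableSet s) :
    laplaceMeasure b (Neg.neg ⁻¹' s) = laplaceMeasure b s := by
  have hdensity : Measurable fun x : ℝ => ENNReal.ofReal (exp (-|x| / b) / (2 * b)) := by
    fun_prop
  rw [laplaceMeasure, withDensity_apply _ (measurable_neg hs), withDensity_apply _ hs,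
    ← Measure.map_neg_eq_self (volume : Measure ℝ), setLIntegral_map hs hdensity measurable_neg,
    Measure.map_neg_eq_self]
  simp_rw [abs_neg]

lemma laplaceMeasure_Ioi (hb : 0 < b) {t : ℝ} (ht : 0 ≤ t) :
    laplaceMeasure b (Ioi t) = ENNReal.ofReal (exp (-t / b) / 2) := by
  have hdensity : ∀ x ∈ Ioi t, ENNReal.ofReal (exp (-|x| / b) / (2 * b)) =
      ENNReal.ofReal (2 * b)⁻¹ * ENNReal.ofReal (exp (-x / b)) := fun x hx => by
    rw [abs_of_pos (ht.trans_lt hx), ← ENNReal.ofReal_mul (by positivity), div_eq_inv_mul]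
  rw [laplaceMeasure, withDensity_apply _ measurableSet_Ioi,
    setLIntegral_congr_fun measurableSet_Ioi hdensity,
    lintegral_const_mul' _ _ ENNReal.ofReal_ne_top, lintegral_Ioi_exp_neg_div hb,
    ← ENNReal.ofReal_mul (by positivity)]
  congr 1
  field_simp

lemma laplaceMeasure_Iic_neg (hb : 0 < b) {t : ℝ} (ht : 0 ≤ t) :
    laplaceMeasure b (Iic (-t)) = ENNReal.ofReal (exp (-t / b) / 2) := by
  rw [← laplaceMeasure_Ioi hb ht, measure_congr Ioi_ae_eq_Ici,
    ← laplaceMeasure_preimage_neg measurableSet_Ici, neg_preimage, neg_Ici]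

lemma laplaceMeasure_abs_ge (hb : 0 < b) {t : ℝ} (ht : 0 ≤ t) :
    laplaceMeasure b {x | t ≤ |x|} = ENNReal.ofReal (exp (-t / b)) := by
  have hset : {x : ℝ | t ≤ |x|} = Iic (-t) ∪ Ici t := by
    ext x; simp only [mem_ofPred_eq, mem_union, mem_Iic, mem_Ici, le_abs, le_neg]; tauto
  rw [hset, measure_congr (Filter.EventuallyEq.rfl.union Ioi_ae_eq_Ici).symm,
    measure_union (Iic_disjoint_Ioi (by linarith)) measurableSet_Ioi, laplaceMeasure_Iic_neg hb ht,
    laplaceMeasure_Ioi hb ht, ← ENNReal.ofReal_add (by positivity) (by positivity), add_halves]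

lemma isProbabilityMeasure_laplaceMeasure (hb : 0 < b) :
    IsProbabilityMeasure (laplaceMeasure b) :=
  ⟨by simpa using laplaceMeasure_abs_ge hb le_rfl⟩

lemma laplaceMeasure_abs_ge_le (hb : 0 < b) (t : ℝ) :
    laplaceMeasure b {x | t ≤ |x|} ≤ ENNReal.ofReal (exp (-t / b)) := by
  rcases le_or_gt 0 t with ht | ht
  · exact (laplaceMeasure_abs_ge hb ht).le
  · have := isProbabilityMeasure_laplaceMeasure hb
    calc laplaceMeasure b {x | t ≤ |x|} ≤ 1 := prob_le_one
      _ ≤ ENNReal.ofReal (exp (-t / b)) := by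
        have : 0 ≤ -t / b := div_nonneg (neg_nonneg.mpr ht.le) hb.le
        rw [← ENNReal.ofReal_one]
        exact ENNReal.ofReal_le_ofReal (one_le_exp this)

end laplaceMeasure

theorem laplace_vector_tail (d : ℕ) (hd : 1 ≤ d) (b : ℝ) (hb : 0 < b)
    (β : ℝ) (hβ : 0 < β) :
    (Measure.pi fun _ : Fin d => laplaceMeasure b)
        {x | b * Real.sqrt d * Real.log (d / β) ≤ Real.sqrt (∑ s, x s ^ 2)}
      ≤ ENNReal.ofReal β := by
  have := isProbabilityMeasure_laplaceMeasure hb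
  have : Nonempty (Fin d) := ⟨⟨0, hd⟩⟩
  have hd₀ : (0 : ℝ) < d := by exact_mod_cast hd
  set c := b * log (d / β)
  have hsub : {x : Fin d → ℝ | b * √d * log (d / β) ≤ √(∑ s, x s ^ 2)} ⊆
      {x | ∃ s, x s ∈ {y | c ≤ |y|}} := fun x hx => by
    obtain ⟨s, hs⟩ := exists_sqrt_sum_sq_le_sqrt_card_mul_abs x
    rw [Fintype.card_fin] at hs
    exact ⟨s, le_of_mul_le_mul_left (by linarith [hx.out]) (sqrt_pos.mpr hd₀)⟩
  have htail : exp (-c / b) = β / d := by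
    rw [show -c / b = -log (d / β) by simp only [c]; field_simp, exp_neg,
      exp_log (by positivity), inv_div]
  calc _ ≤ _ := measure_mono hsub
    _ ≤ ∑ _s : Fin d, laplaceMeasure b {y | c ≤ |y|} :=
        measure_pi_exists_mem_le_sum _ fun _ => measurableSet_le measurable_const measurable_abs
    _ ≤ ∑ _s : Fin d, ENNReal.ofReal (β / d) := by
        gcongr; rw [← htail]; exact laplaceMeasure_abs_ge_le hb c
    _ = ENNReal.ofReal β := by
        rw [Finset.sum_const, Finset.card_univ, Fintype.card_fin, nsmul_eq_mul,
          ← ENNReal.ofReal_natCast, ← ENNReal.ofReal_mul hd₀.le, mul_div_cancel₀ _ hd₀.ne']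
end

section
/- Let k ≥ 1 be an integer and let ε > 0 and δ' ∈ (0, 1/2] satisfy ε < 1/√k and 1/√k < log 2. Then ε·√(2k·log(1/δ')) + k·ε·(e^ε − 1) ≤ √(6k·log(1/δ')). -/
/-!
Write `L = log (1/δ') ≥ log 2 > 1/2`. Since `ε √k < 1`, the first term is at most `√(2L)`, and
since `e^ε - 1 ≤ 2ε` on `[0, 1]`, the second is at most `2 k ε² ≤ 2 ≤ 2 √(2L)`. The hypothesis
`1/√k < log 2 < 0.7` forces `k ≥ 3`, and the total `3 √(2L) = √(18 L)` is at most `√(6 k L)`.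
-/

open Real

lemma three_le_of_one_div_sqrt_lt_log_two {k : ℕ} (hk : 0 < k) (h : 1 / √k < log 2) :
    3 ≤ k := by
  have hsk : 0 < √(k : ℝ) := sqrt_pos.2 (by exact_mod_cast hk)
  have h1 : 1 < log 2 * √k := (div_lt_iff₀ hsk).mp h
  have h2 : 1 < log 2 ^ 2 * k := by
    have := pow_lt_pow_left₀ h1 zero_le_one two_ne_zero
    rwa [one_pow, mul_pow, sq_sqrt (Nat.cast_nonneg k)] at this
  have hlog : log 2 ^ 2 < 0.49 := by
    nlinarith [log_two_lt_d9, log_two_gt_d9]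
  have : (2 : ℝ) < k := by nlinarith
  exact_mod_cast this

lemma Real.mul_sqrt_mul_le_sqrt {ε x y : ℝ} (hx : 0 ≤ x) (h : ε * √x ≤ 1) :
    ε * √(x * y) ≤ √y := by
  rw [sqrt_mul hx, ← mul_assoc]
  exact mul_le_of_le_one_left (sqrt_nonneg y) h

lemma Real.mul_mul_exp_sub_one_le_two {ε x : ℝ} (hε : 0 ≤ ε) (hε1 : ε ≤ 1) (hx : 0 ≤ x)
    (h : ε * √x ≤ 1) : x * ε * (exp ε - 1) ≤ 2 := by
  have hexp : exp ε - 1 ≤ 2 * ε := by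
    have := abs_exp_sub_one_le (x := ε) (by rwa [abs_of_nonneg hε])
    rw [abs_of_nonneg hε] at this
    exact (le_abs_self _).trans this
  have hsq : x * ε ^ 2 ≤ 1 := by
    have := pow_le_one₀ (mul_nonneg hε (sqrt_nonneg x)) h (n := 2)
    rwa [mul_pow, sq_sqrt hx, mul_comm] at this
  calc x * ε * (exp ε - 1) ≤ x * ε * (2 * ε) := by gcongr
    _ = 2 * (x * ε ^ 2) := by ring
    _ ≤ 2 := by linarith

lemma Real.sqrt_two_mul_add_two_le_sqrt_six_mul_mul {x L : ℝ} (hx : 3 ≤ x) (hL : 1 / 2 ≤ L) :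
    √(2 * L) + 2 ≤ √(6 * x * L) := by
  have h1 : 1 ≤ √(2 * L) := one_le_sqrt.2 (by linarith)
  calc √(2 * L) + 2 ≤ √(3 ^ 2 * (2 * L)) := by
        rw [sqrt_mul (by norm_num) (2 * L), sqrt_sq (by norm_num)]; linarith
    _ ≤ √(6 * x * L) := sqrt_le_sqrt (by nlinarith)

theorem advanced_composition_simplification
    (k : ℕ) (hk : 1 ≤ k) (ε δ' : ℝ) (hε : 0 < ε)
    (hδ'0 : 0 < δ') (hδ'1 : δ' ≤ 1 / 2)
    (hεk : ε < 1 / Real.sqrt k) (hklog : 1 / Real.sqrt k < Real.log 2) :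
    ε * Real.sqrt (2 * k * Real.log (1 / δ')) + k * ε * (Real.exp ε - 1)
      ≤ Real.sqrt (6 * k * Real.log (1 / δ')) := by
  set L := log (1 / δ')
  have hk0 : 0 < k := by exact_mod_cast hk
  have hsk : 1 ≤ √(k : ℝ) := one_le_sqrt.2 (by exact_mod_cast hk)
  have hεs : ε * √k < 1 := (lt_div_iff₀ (by linarith)).mp hεk
  have hε1 : ε ≤ 1 := by nlinarith
  have hL : 1 / 2 ≤ L := by
    have : log 2 ≤ L := log_le_log two_pos (by rw [le_div_iff₀ hδ'0]; linarith)
    linarith [log_two_gt_d9]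
  have hk3 : (3 : ℝ) ≤ k := by exact_mod_cast three_le_of_one_div_sqrt_lt_log_two hk0 hklog
  calc ε * √(2 * k * L) + k * ε * (exp ε - 1) ≤ √(2 * L) + 2 := by
        gcongr
        · rw [show 2 * (k : ℝ) * L = k * (2 * L) by ring]
          exact mul_sqrt_mul_le_sqrt (Nat.cast_nonneg k) hεs.le
        · exact mul_mul_exp_sub_one_le_two hε.le hε1 (Nat.cast_nonneg k) hεs.le
    _ ≤ √(6 * k * L) := sqrt_two_mul_add_two_le_sqrt_six_mul_mul hk3 hL
end

section
/- Let R be a Markov kernel from a measurable space H to a measurable space Q that satisfies (ε,δ)-differential privacy between all pairs of inputs, i.e., R(h)(S) ≤ e^ε·R(h')(S) + δ for all h, h' ∈ H and all measurable S ⊆ Q, where ε ≥ 0 and δ ∈ [0,1]. For probability measures μ and μ' on H, let ν = ∫ R(h) dμ(h) and ν' = ∫ R(h) dμ'(h) be the corresponding output distributions. Then KL(ν, ν') ≤ (1 − e^{−ε}(1 − δ))·KL(μ, μ') and d_TV(ν, ν') ≤ (1 − e^{−ε}(1 − δ))·d_TV(μ, μ'). -/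
/-!
Applied to complements, the privacy condition bounds the oscillation of the channel:
`R h S ≤ R h' S + c` with `c = 1 - e^{-ε}(1 - δ)`. Splitting integrals along a Hahn decomposition,
this makes every hockey-stick divergence `E(α, β) = sup_A (α A - β A)` with `α(H) ≤ β(H)` contract
by the factor `c` under `R`. Total variation between probability measures is `E(μ, μ')`, and KL is
a mixture of hockey-stick divergences: `t log t - t + 1 = ∫₀^∞ γ⁻¹ ψ_γ(t) dγ`, where
`ψ_γ(t) = (γ - t)⁺` for `γ ≤ 1` and `(t - γ)⁺` for `γ > 1` (`hockeyStickFun`), so that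
`KL(P, Q) = ∫₀^∞ γ⁻¹ E_γ(P, Q) dγ` with `E_γ` equal to `E(γQ, P)` or `E(P, γQ)` accordingly
(`hockeyStickDivAt`).
-/

open MeasureTheory ProbabilityTheory
open scoped ENNReal

attribute [local instance] Classical.propDecidable

/-- Kullback–Leibler divergence: `∫ log(dμ/dν) dμ` when `μ ≪ ν` (and the log-likelihood
ratio is `μ`-integrable), and `+∞` otherwise. -/
noncomputable def klDiv' {X : Type*} [MeasurableSpace X] (μ ν : Measure X) : ℝ≥0∞ :=
  if μ ≪ ν ∧ Integrable (MeasureTheory.llr μ ν) μ then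
    ENNReal.ofReal (∫ x, MeasureTheory.llr μ ν x ∂μ)
  else ⊤

open Set InformationTheory
open scoped Interval

section

variable {X Y : Type*} [MeasurableSpace X] [MeasurableSpace Y]

noncomputable def hockeyStickDiv (α β : Measure X) : ℝ≥0∞ :=
  ⨆ (A : Set X) (_ : MeasurableSet A), α A - β A

section HockeyStick

variable {α β : Measure X}

lemma measure_sub_le_hockeyStickDiv {A : Set X} (hA : MeasurableSet A) :
    α A - β A ≤ hockeyStickDiv α β :=
  le_iSup₂ (f := fun A (_ : MeasurableSet A) => α A - β A) A hA

lemma hockeyStickDiv_le_measure_univ : hockeyStickDiv α β ≤ α univ :=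
  iSup₂_le fun _ _ => tsub_le_self.trans (measure_mono (subset_univ _))

lemma hockeyStickDiv_ne_top [IsFiniteMeasure α] : hockeyStickDiv α β ≠ ∞ :=
  ne_top_of_le_ne_top (measure_ne_top α univ) hockeyStickDiv_le_measure_univ

lemma hockeyStickDiv_eq_zero_iff : hockeyStickDiv α β = 0 ↔ α ≤ β := by
  simp [hockeyStickDiv, tsub_eq_zero_iff_le, Measure.le_iff]

lemma hockeyStickDiv_withDensity {μ : Measure X} {f g : X → ℝ≥0∞} (hf : Measurable f)
    (hg : Measurable g) (hg_fin : ∫⁻ x, g x ∂μ ≠ ∞) :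
    hockeyStickDiv (μ.withDensity f) (μ.withDensity g) = ∫⁻ x, f x - g x ∂μ := by
  refine le_antisymm (iSup₂_le fun A hA => ?_) ?_
  · rw [withDensity_apply _ hA, withDensity_apply _ hA, tsub_le_iff_right]
    calc ∫⁻ x in A, f x ∂μ ≤ ∫⁻ x in A, (f x - g x + g x) ∂μ := lintegral_mono fun x => le_tsub_add
      _ = ∫⁻ x in A, (f x - g x) ∂μ + ∫⁻ x in A, g x ∂μ := lintegral_add_right _ hg
      _ ≤ ∫⁻ x, (f x - g x) ∂μ + ∫⁻ x in A, g x ∂μ := by gcongr; exact Measure.restrict_le_self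
  · set A := {x | g x < f x}
    have hA : MeasurableSet A := measurableSet_lt hg hf
    calc ∫⁻ x, f x - g x ∂μ = ∫⁻ x in A, f x - g x ∂μ := by
          rw [← lintegral_add_compl _ hA, setLIntegral_congr_fun hA.compl
            (fun x hx => tsub_eq_zero_of_le (not_lt.1 hx)), lintegral_zero, add_zero]
      _ = ∫⁻ x in A, f x ∂μ - ∫⁻ x in A, g x ∂μ :=
          lintegral_sub hg (ne_top_of_le_ne_top hg_fin (setLIntegral_le_lintegral _ _))
            ((ae_restrict_iff' hA).2 (ae_of_all _ fun x hx => hx.le))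
      _ ≤ hockeyStickDiv _ _ := by
          rw [← withDensity_apply _ hA, ← withDensity_apply _ hA]
          exact measure_sub_le_hockeyStickDiv hA

variable [IsFiniteMeasure α] [IsFiniteMeasure β]

lemma lintegral_le_lintegral_add_mul_hockeyStickDiv_of_le {g : X → ℝ≥0∞} {c : ℝ≥0∞}
    (hgc : ∀ x, g x ≤ c) :
    ∫⁻ x, g x ∂α ≤ ∫⁻ x, g x ∂β + c * hockeyStickDiv α β := by
  obtain ⟨s, hs, hβα, hαβ⟩ := hahn_decomposition α β
  have hβα' : β.restrict s ≤ α.restrict s := Measure.le_iff.2 fun t ht => by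
    simpa only [Measure.restrict_apply ht] using hβα _ (ht.inter hs) inter_subset_right
  have hαβ' : α.restrict sᶜ ≤ β.restrict sᶜ := Measure.le_iff.2 fun t ht => by
    simpa only [Measure.restrict_apply ht] using hαβ _ (ht.inter hs.compl) inter_subset_right
  have h_on_s : ∫⁻ x in s, g x ∂α ≤ c * (α s - β s) + ∫⁻ x in s, g x ∂β := by
    calc ∫⁻ x in s, g x ∂α
        = ∫⁻ x, g x ∂(α.restrict s - β.restrict s) + ∫⁻ x in s, g x ∂β := by
          rw [← lintegral_add_measure, Measure.sub_add_cancel_of_le hβα']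
      _ ≤ ∫⁻ _, c ∂(α.restrict s - β.restrict s) + ∫⁻ x in s, g x ∂β := by
          gcongr; exact hgc _
      _ = c * (α s - β s) + ∫⁻ x in s, g x ∂β := by
          rw [lintegral_const, Measure.sub_apply .univ hβα', Measure.restrict_apply_univ,
            Measure.restrict_apply_univ]
  calc ∫⁻ x, g x ∂α = ∫⁻ x in s, g x ∂α + ∫⁻ x in sᶜ, g x ∂α := (lintegral_add_compl _ hs).symm
    _ ≤ c * (α s - β s) + ∫⁻ x in s, g x ∂β + ∫⁻ x in sᶜ, g x ∂β :=
        add_le_add h_on_s (lintegral_mono' hαβ' le_rfl)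
    _ = ∫⁻ x, g x ∂β + c * (α s - β s) := by rw [add_assoc, lintegral_add_compl _ hs, add_comm]
    _ ≤ ∫⁻ x, g x ∂β + c * hockeyStickDiv α β := by
        gcongr; exact measure_sub_le_hockeyStickDiv hs

/-- Subtracting `⨅ f` reduces to functions with values in `[0, c]`; the mass condition absorbs
the subtracted constant. -/
lemma lintegral_le_lintegral_add_mul_hockeyStickDiv {f : X → ℝ≥0∞} {c : ℝ≥0∞}
    (hf : ∀ x y, f x ≤ f y + c) (hαβ : α univ ≤ β univ) :
    ∫⁻ x, f x ∂α ≤ ∫⁻ x, f x ∂β + c * hockeyStickDiv α β := by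
  set m := ⨅ y, f y
  have hm : ∀ x, m ≤ f x := iInf_le f
  have hfm : ∀ x, f x - m ≤ c := fun x =>
    tsub_le_iff_left.2 (tsub_le_iff_right.1 (le_iInf fun y => tsub_le_iff_right.2 (hf x y)))
  have hsplit : ∀ ν : Measure X, ∫⁻ x, f x ∂ν = ∫⁻ x, (f x - m) ∂ν + m * ν univ := fun ν => by
    rw [← lintegral_const, ← lintegral_add_right _ measurable_const]
    exact lintegral_congr fun x => (tsub_add_cancel_of_le (hm x)).symm
  calc ∫⁻ x, f x ∂α = ∫⁻ x, (f x - m) ∂α + m * α univ := hsplit α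
    _ ≤ ∫⁻ x, (f x - m) ∂β + c * hockeyStickDiv α β + m * β univ := by
        gcongr
        exact lintegral_le_lintegral_add_mul_hockeyStickDiv_of_le hfm
    _ = ∫⁻ x, f x ∂β + c * hockeyStickDiv α β := by rw [hsplit β]; ring

lemma toReal_sub_le_toReal_hockeyStickDiv {A : Set X} (hA : MeasurableSet A) :
    (α A).toReal - (β A).toReal ≤ (hockeyStickDiv α β).toReal := by
  have h := ENNReal.toReal_mono (ENNReal.add_ne_top.2 ⟨measure_ne_top β A, hockeyStickDiv_ne_top⟩)
    (tsub_le_iff_left.1 (measure_sub_le_hockeyStickDiv (α := α) (β := β) hA))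
  rw [ENNReal.toReal_add (measure_ne_top β A) hockeyStickDiv_ne_top] at h
  linarith

lemma hockeyStickDiv_comp_le (κ : Kernel X Y) {c : ℝ≥0∞}
    (hκ : ∀ x x' S, MeasurableSet S → κ x S ≤ κ x' S + c) (hαβ : α univ ≤ β univ) :
    hockeyStickDiv (κ ∘ₘ α) (κ ∘ₘ β) ≤ c * hockeyStickDiv α β :=
  iSup₂_le fun S hS => by
    rw [Measure.bind_apply hS κ.aemeasurable, Measure.bind_apply hS κ.aemeasurable,
      tsub_le_iff_left]
    exact lintegral_le_lintegral_add_mul_hockeyStickDiv (fun x x' => hκ x x' S hS) hαβ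

end HockeyStick

section TotalVariation

variable {μ ν : Measure X} [IsProbabilityMeasure μ] [IsProbabilityMeasure ν]

lemma abs_toReal_sub_le_toReal_hockeyStickDiv {A : Set X} (hA : MeasurableSet A) :
    |(μ A).toReal - (ν A).toReal| ≤ (hockeyStickDiv μ ν).toReal := by
  have hcompl := toReal_sub_le_toReal_hockeyStickDiv (α := μ) (β := ν) hA.compl
  rw [← measureReal_def, ← measureReal_def, probReal_compl_eq_one_sub hA,
    probReal_compl_eq_one_sub hA] at hcompl
  rw [abs_sub_le_iff]
  exact ⟨toReal_sub_le_toReal_hockeyStickDiv hA, by simp only [measureReal_def] at hcompl; linarith⟩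

lemma tvDist_eq_toReal_hockeyStickDiv : tvDist μ ν = (hockeyStickDiv μ ν).toReal := by
  have hbdd : BddAbove (range fun A : {A : Set X // MeasurableSet A} =>
      |(μ A.1).toReal - (ν A.1).toReal|) :=
    ⟨_, forall_mem_range.2 fun A => abs_toReal_sub_le_toReal_hockeyStickDiv A.2⟩
  have hle : ∀ A, MeasurableSet A → |(μ A).toReal - (ν A).toReal| ≤ tvDist μ ν :=
    fun A hA => le_ciSup hbdd ⟨A, hA⟩
  have : Nonempty {A : Set X // MeasurableSet A} := ⟨⟨∅, .empty⟩⟩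
  refine le_antisymm (ciSup_le fun A => abs_toReal_sub_le_toReal_hockeyStickDiv A.2) ?_
  refine ENNReal.toReal_le_of_le_ofReal ((abs_nonneg _).trans (hle ∅ .empty))
    (iSup₂_le fun A hA => ?_)
  calc μ A - ν A = ENNReal.ofReal ((μ A).toReal - (ν A).toReal) := by
        rw [ENNReal.ofReal_sub _ ENNReal.toReal_nonneg, ENNReal.ofReal_toReal (measure_ne_top _ _),
          ENNReal.ofReal_toReal (measure_ne_top _ _)]
    _ ≤ ENNReal.ofReal (tvDist μ ν) := ENNReal.ofReal_le_ofReal ((le_abs_self _).trans (hle A hA))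

end TotalVariation

section KullbackLeibler

/-- The boundary case `γ = 1` goes to the first branch, so that `γ⁻¹ ψ_γ(t)` vanishes exactly
off `Ι 1 t` (see `inv_mul_hockeyStickFun_ofReal_eq_indicator`). -/
noncomputable def hockeyStickFun (γ : ℝ) (a : ℝ≥0∞) : ℝ≥0∞ :=
  if γ ≤ 1 then ENNReal.ofReal γ - a else a - ENNReal.ofReal γ

noncomputable def hockeyStickDivAt (γ : ℝ) (P Q : Measure X) : ℝ≥0∞ :=
  if γ ≤ 1 then hockeyStickDiv (ENNReal.ofReal γ • Q) P else hockeyStickDiv P (ENNReal.ofReal γ • Q)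

lemma measurable_hockeyStickFun : Measurable fun p : ℝ × ℝ≥0∞ => hockeyStickFun p.1 p.2 :=
  Measurable.ite (measurableSet_le measurable_fst measurable_const)
    ((ENNReal.measurable_ofReal.comp measurable_fst).sub measurable_snd)
    (measurable_snd.sub (ENNReal.measurable_ofReal.comp measurable_fst))

lemma inv_mul_hockeyStickFun_ofReal_eq_indicator {γ t : ℝ} (hγ : 0 < γ) (ht : 0 ≤ t) :
    (ENNReal.ofReal γ)⁻¹ * hockeyStickFun γ (ENNReal.ofReal t)
      = (Ι 1 t).indicator (fun γ => ENNReal.ofReal |t * γ⁻¹ - 1|) γ := by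
  have hinv : t * γ⁻¹ - 1 = γ⁻¹ * (t - γ) := by field_simp
  have hγ' : 0 ≤ γ⁻¹ := inv_nonneg.2 hγ.le
  rw [← ENNReal.ofReal_inv_of_pos hγ, hockeyStickFun, indicator_apply, mem_uIoc, hinv]
  split_ifs with h1 h2 h2
  · rw [← ENNReal.ofReal_sub _ ht, ← ENNReal.ofReal_mul hγ', abs_of_nonpos
      (mul_nonpos_of_nonneg_of_nonpos hγ' (by rcases h2 with h2 | h2 <;> linarith)), ← mul_neg,
      neg_sub]
  · rw [← ENNReal.ofReal_sub _ ht, ← ENNReal.ofReal_mul hγ', ENNReal.ofReal_eq_zero]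
    exact mul_nonpos_of_nonneg_of_nonpos hγ'
      (sub_nonpos.2 (le_of_not_gt fun hlt => h2 (Or.inr ⟨hlt, h1⟩)))
  · rw [← ENNReal.ofReal_sub _ hγ.le, ← ENNReal.ofReal_mul hγ', abs_of_nonneg
      (mul_nonneg hγ' (by rcases h2 with h2 | h2 <;> linarith))]
  · rw [← ENNReal.ofReal_sub _ hγ.le, ← ENNReal.ofReal_mul hγ', ENNReal.ofReal_eq_zero]
    exact mul_nonpos_of_nonneg_of_nonpos hγ'
      (sub_nonpos.2 (le_of_not_ge fun hle => h2 (Or.inl ⟨not_le.1 h1, hle⟩)))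

lemma intervalIntegrable_mul_inv {t : ℝ} (ht : 0 ≤ t) :
    IntervalIntegrable (fun γ => t * γ⁻¹) volume 1 t := by
  rcases ht.eq_or_lt with rfl | ht
  · simp
  · exact (intervalIntegrable_inv_iff.2 (Or.inr (notMem_uIcc_of_lt one_pos ht))).const_mul t

lemma integral_mul_inv_sub_one_eq_klFun {t : ℝ} (ht : 0 ≤ t) :
    ∫ γ in (1 : ℝ)..t, (t * γ⁻¹ - 1) = klFun t := by
  rcases ht.eq_or_lt with rfl | ht
  · simp [klFun_zero]
  · rw [intervalIntegral.integral_sub (intervalIntegrable_mul_inv ht.le) intervalIntegrable_const,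
      intervalIntegral.integral_const_mul, integral_inv_of_pos one_pos ht, div_one,
      intervalIntegral.integral_const, klFun]
    simp only [smul_eq_mul, mul_one]
    ring

lemma lintegral_inv_mul_hockeyStickFun_eq_klFun {t : ℝ} (ht : 0 ≤ t) :
    ∫⁻ γ in Ioi 0, (ENNReal.ofReal γ)⁻¹ * hockeyStickFun γ (ENNReal.ofReal t)
      = ENNReal.ofReal (klFun t) := by
  have hsub : Ι 1 t ⊆ Ioi 0 := fun γ hγ => lt_of_le_of_lt (le_min zero_le_one ht) hγ.1
  rw [setLIntegral_congr_fun measurableSet_Ioi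
      (fun γ hγ => inv_mul_hockeyStickFun_ofReal_eq_indicator hγ ht), lintegral_indicator measurableSet_uIoc, Measure.restrict_restrict measurableSet_uIoc,
    inter_eq_left.2 hsub, ← integral_mul_inv_sub_one_eq_klFun ht]
  have hint : IntervalIntegrable (fun γ => t * γ⁻¹ - 1) volume 1 t :=
    (intervalIntegrable_mul_inv ht).sub intervalIntegrable_const
  rcases le_total 1 t with h | h
  · have hnn : ∀ γ ∈ Ioc 1 t, 0 ≤ t * γ⁻¹ - 1 := fun γ hγ => by
      rw [sub_nonneg, ← div_eq_mul_inv, one_le_div (by linarith [hγ.1])]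
      exact hγ.2
    rw [uIoc_of_le h, intervalIntegral.integral_of_le h, ofReal_integral_eq_lintegral_ofReal hint.1
      ((ae_restrict_iff' measurableSet_Ioc).2 (ae_of_all _ hnn))]
    exact setLIntegral_congr_fun measurableSet_Ioc fun γ hγ => by rw [abs_of_nonneg (hnn γ hγ)]
  · have hnp : ∀ γ ∈ Ioc t 1, t * γ⁻¹ - 1 ≤ 0 := fun γ hγ => by
      rw [sub_nonpos, ← div_eq_mul_inv, div_le_one (by linarith [hγ.1])]
      exact hγ.1.le
    rw [uIoc_of_ge h, intervalIntegral.integral_of_ge h, ← integral_neg,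
      ofReal_integral_eq_lintegral_ofReal (f := fun γ => -(t * γ⁻¹ - 1)) hint.2.neg
      ((ae_restrict_iff' measurableSet_Ioc).2 (ae_of_all _ fun γ hγ => neg_nonneg.2 (hnp γ hγ)))]
    exact setLIntegral_congr_fun measurableSet_Ioc fun γ hγ => by rw [abs_of_nonpos (hnp γ hγ)]

variable {P Q : Measure X} [IsFiniteMeasure P] [IsFiniteMeasure Q]

lemma lintegral_hockeyStickFun_rnDeriv (hPQ : P ≪ Q) (γ : ℝ) :
    ∫⁻ x, hockeyStickFun γ (P.rnDeriv Q x) ∂Q = hockeyStickDivAt γ P Q := by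
  have hP : Q.withDensity (P.rnDeriv Q) = P := Measure.withDensity_rnDeriv_eq P Q hPQ
  have hγQ : Q.withDensity (fun _ => ENNReal.ofReal γ) = ENNReal.ofReal γ • Q := withDensity_const _
  by_cases hγ : γ ≤ 1
  · have := hockeyStickDiv_withDensity (μ := Q) (f := fun _ => ENNReal.ofReal γ) measurable_const
      (Measure.measurable_rnDeriv P Q) (Measure.lintegral_rnDeriv_lt_top P Q).ne
    simp only [hockeyStickFun, hockeyStickDivAt, hγ, if_true]
    rw [← this, hP, hγQ]
  · have := hockeyStickDiv_withDensity (μ := Q) (Measure.measurable_rnDeriv P Q) measurable_const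
      (by simp [lintegral_const, ENNReal.mul_eq_top]) (g := fun _ => ENNReal.ofReal γ)
    simp only [hockeyStickFun, hockeyStickDivAt, hγ, if_false]
    rw [← this, hP, hγQ]

lemma klDiv_eq_lintegral_hockeyStickDivAt (hPQ : P ≪ Q) :
    klDiv P Q = ∫⁻ γ in Ioi 0, (ENNReal.ofReal γ)⁻¹ * hockeyStickDivAt γ P Q := by
  have hψ : Measurable fun p : X × ℝ =>
      (ENNReal.ofReal p.2)⁻¹ * hockeyStickFun p.2 (P.rnDeriv Q p.1) :=
    (ENNReal.measurable_ofReal.comp measurable_snd).inv.mul (measurable_hockeyStickFun.comp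
      (measurable_snd.prodMk ((Measure.measurable_rnDeriv P Q).comp measurable_fst)))
  calc klDiv P Q
      = ∫⁻ x, (∫⁻ γ in Ioi 0, (ENNReal.ofReal γ)⁻¹ * hockeyStickFun γ (P.rnDeriv Q x)) ∂Q := by
        rw [klDiv_eq_lintegral_klFun_of_ac hPQ]
        refine lintegral_congr_ae ?_
        filter_upwards [Measure.rnDeriv_lt_top P Q] with x hx
        rw [← lintegral_inv_mul_hockeyStickFun_eq_klFun ENNReal.toReal_nonneg,
          ENNReal.ofReal_toReal hx.ne]
    _ = ∫⁻ γ in Ioi 0, ∫⁻ x, (ENNReal.ofReal γ)⁻¹ * hockeyStickFun γ (P.rnDeriv Q x) ∂Q :=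
        lintegral_lintegral_swap hψ.aemeasurable
    _ = ∫⁻ γ in Ioi 0, (ENNReal.ofReal γ)⁻¹ * hockeyStickDivAt γ P Q := by
        refine lintegral_congr fun γ => ?_
        have hψγ : Measurable fun x => hockeyStickFun γ (P.rnDeriv Q x) :=
          measurable_hockeyStickFun.comp (measurable_const.prodMk (Measure.measurable_rnDeriv P Q))
        rw [lintegral_const_mul _ hψγ, lintegral_hockeyStickFun_rnDeriv hPQ]

lemma hockeyStickDivAt_comp_le (κ : Kernel X Y) {c : ℝ≥0∞}
    (hκ : ∀ x x' S, MeasurableSet S → κ x S ≤ κ x' S + c)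
    (μ μ' : Measure X) [IsProbabilityMeasure μ] [IsProbabilityMeasure μ'] (γ : ℝ) :
    hockeyStickDivAt γ (κ ∘ₘ μ) (κ ∘ₘ μ') ≤ c * hockeyStickDivAt γ μ μ' := by
  have := μ'.smul_finite (ENNReal.ofReal_ne_top (r := γ))
  unfold hockeyStickDivAt
  split_ifs with hγ
  · rw [← Measure.comp_smul]
    exact hockeyStickDiv_comp_le κ hκ (by simpa using ENNReal.ofReal_le_one.2 hγ)
  · rw [← Measure.comp_smul]
    exact hockeyStickDiv_comp_le κ hκ (by simpa using ENNReal.one_le_ofReal.2 (not_le.1 hγ).le)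

lemma klDiv_comp_le (κ : Kernel X Y) [IsFiniteKernel κ] {c : ℝ≥0∞} (hc : c ≠ ∞)
    (hκ : ∀ x x' S, MeasurableSet S → κ x S ≤ κ x' S + c)
    (μ μ' : Measure X) [IsProbabilityMeasure μ] [IsProbabilityMeasure μ'] :
    klDiv (κ ∘ₘ μ) (κ ∘ₘ μ') ≤ c * klDiv μ μ' := by
  by_cases hac : μ ≪ μ'
  · rw [klDiv_eq_lintegral_hockeyStickDivAt (hac.comp_right κ),
      klDiv_eq_lintegral_hockeyStickDivAt hac, ← lintegral_const_mul' _ _ hc]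
    refine lintegral_mono fun γ => ?_
    rw [mul_left_comm]
    gcongr
    exact hockeyStickDivAt_comp_le κ hκ μ μ' γ
  rcases eq_or_ne c 0 with rfl | hc0
  -- `0 * ∞ = 0`, so here the outputs must coincide: with `c = 0` the channel is constant.
  · have hle : ∀ (α β : Measure X) [IsProbabilityMeasure α] [IsProbabilityMeasure β],
        κ ∘ₘ α ≤ κ ∘ₘ β := fun α β _ _ => by
      have := hockeyStickDiv_comp_le κ hκ (α := α) (β := β) (by simp)
      exact hockeyStickDiv_eq_zero_iff.1 (by simpa using this)
    rw [le_antisymm (hle μ μ') (hle μ' μ), klDiv_self]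
    exact zero_le
  · rw [klDiv_of_not_ac hac, ENNReal.mul_top hc0]
    exact le_top

end KullbackLeibler

lemma klDiv'_eq_klDiv (μ ν : Measure X) [IsProbabilityMeasure μ] [IsProbabilityMeasure ν] :
    klDiv' μ ν = klDiv μ ν := by
  by_cases h : μ ≪ ν ∧ Integrable (llr μ ν) μ
  · rw [klDiv', if_pos h, klDiv_of_ac_of_integrable h.1 h.2]
    simp
  · rw [klDiv', if_neg h, eq_comm, klDiv_eq_top_iff]
    tauto

lemma ProbabilityTheory.Kernel.apply_le_apply_add_of_dp (R : Kernel X Y) [IsMarkovKernel R]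
    {ε δ : ℝ} (hε : 0 ≤ ε) (hδ : 0 ≤ δ) (hDP : ∀ h h' : X, ∀ S : Set Y, MeasurableSet S →
      R h S ≤ ENNReal.ofReal (Real.exp ε) * R h' S + ENNReal.ofReal δ)
    (h h' : X) {S : Set Y} (hS : MeasurableSet S) :
    R h S ≤ R h' S + ENNReal.ofReal (1 - Real.exp (-ε) * (1 - δ)) := by
  have hcompl : 1 - (R h' S).toReal ≤ Real.exp ε * (1 - (R h S).toReal) + δ := by
    have := ENNReal.toReal_mono (by finiteness) (hDP h' h Sᶜ hS.compl)
    rwa [ENNReal.toReal_add (by finiteness) (by finiteness), ENNReal.toReal_mul,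
      ENNReal.toReal_ofReal (Real.exp_pos ε).le, ENNReal.toReal_ofReal hδ, ← measureReal_def,
      ← measureReal_def, probReal_compl_eq_one_sub hS, probReal_compl_eq_one_sub hS] at this
  have hreal : (R h S).toReal ≤ (R h' S).toReal + (1 - Real.exp (-ε) * (1 - δ)) := by
    have hexp : Real.exp (-ε) * (Real.exp ε * (1 - (R h S).toReal) + δ)
        = 1 - (R h S).toReal + Real.exp (-ε) * δ := by
      rw [mul_add, ← mul_assoc, ← Real.exp_add, neg_add_cancel, Real.exp_zero, one_mul]
    nlinarith [mul_le_mul_of_nonneg_left hcompl (Real.exp_pos (-ε)).le,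
      mul_le_of_le_one_left (b := (R h' S).toReal) ENNReal.toReal_nonneg
        (Real.exp_le_one_iff.2 (neg_nonpos.2 hε))]
  calc R h S = ENNReal.ofReal (R h S).toReal := (ENNReal.ofReal_toReal (measure_ne_top _ _)).symm
    _ ≤ ENNReal.ofReal ((R h' S).toReal + (1 - Real.exp (-ε) * (1 - δ))) :=
        ENNReal.ofReal_le_ofReal hreal
    _ ≤ R h' S + ENNReal.ofReal (1 - Real.exp (-ε) * (1 - δ)) :=
        ENNReal.ofReal_add_le.trans_eq (by rw [ENNReal.ofReal_toReal (measure_ne_top _ _)])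

end

theorem dp_channel_contraction_general
    {H Q : Type*} [MeasurableSpace H] [MeasurableSpace Q]
    (R : ProbabilityTheory.Kernel H Q) [ProbabilityTheory.IsMarkovKernel R]
    (ε δ : ℝ) (hε : 0 ≤ ε) (hδ0 : 0 ≤ δ)
    (hDP : ∀ h h' : H, ∀ S : Set Q, MeasurableSet S →
      R h S ≤ ENNReal.ofReal (Real.exp ε) * R h' S + ENNReal.ofReal δ)
    (μ μ' : Measure H) [IsProbabilityMeasure μ] [IsProbabilityMeasure μ'] :
    klDiv' (μ.bind fun h => R h) (μ'.bind fun h => R h)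
        ≤ ENNReal.ofReal (1 - Real.exp (-ε) * (1 - δ)) * klDiv' μ μ' ∧
      tvDist (μ.bind fun h => R h) (μ'.bind fun h => R h)
        ≤ (1 - Real.exp (-ε) * (1 - δ)) * tvDist μ μ' := by
  have hc : 0 ≤ 1 - Real.exp (-ε) * (1 - δ) := by
    nlinarith [Real.exp_pos (-ε), Real.exp_le_one_iff.2 (neg_nonpos.2 hε)]
  have hR := fun h h' S (hS : MeasurableSet S) => R.apply_le_apply_add_of_dp hε hδ0 hDP h h' hS
  refine ⟨?_, ?_⟩
  · rw [klDiv'_eq_klDiv, klDiv'_eq_klDiv]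
    exact klDiv_comp_le R ENNReal.ofReal_ne_top hR μ μ'
  · rw [tvDist_eq_toReal_hockeyStickDiv, tvDist_eq_toReal_hockeyStickDiv,
      ← ENNReal.toReal_ofReal hc, ← ENNReal.toReal_mul]
    exact ENNReal.toReal_mono (ENNReal.mul_ne_top ENNReal.ofReal_ne_top hockeyStickDiv_ne_top)
      (hockeyStickDiv_comp_le R hR (by simp))

theorem dp_channel_contraction
    {H Q : Type*} [MeasurableSpace H] [MeasurableSpace Q]
    (R : ProbabilityTheory.Kernel H Q) [ProbabilityTheory.IsMarkovKernel R]
    (ε δ : ℝ) (hε : 0 ≤ ε) (hδ0 : 0 ≤ δ) (hδ1 : δ ≤ 1)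
    (hDP : ∀ h h' : H, ∀ S : Set Q, MeasurableSet S →
      R h S ≤ ENNReal.ofReal (Real.exp ε) * R h' S + ENNReal.ofReal δ)
    (μ μ' : Measure H) [IsProbabilityMeasure μ] [IsProbabilityMeasure μ'] :
    klDiv' (μ.bind fun h => R h) (μ'.bind fun h => R h)
        ≤ ENNReal.ofReal (1 - Real.exp (-ε) * (1 - δ)) * klDiv' μ μ' ∧
      tvDist (μ.bind fun h => R h) (μ'.bind fun h => R h)
        ≤ (1 - Real.exp (-ε) * (1 - δ)) * tvDist μ μ' :=
  dp_channel_contraction_general R ε δ hε hδ0 hDP μ μ'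
end
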